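/- arXiv:1902.07672 — 3 statements merged into one kernel-verified Lean document; each statement's English description precedes it below -/
import Mathlib

section
/- Proximal gradient descent with η = c/L, 0 < c < 1, run for T = 4(η²L² + 1)Δ / (η(1 - ηL)ε²) iterations, satisfies (1/T)Σ_{t=0}^{T-1} ‖∇f(x_{t+1}) - ∇f(x_t) - (1/η)(x_{t+1} - x_t)‖² ≤ ε², and hence the uniformly sampled iterate x_R satisfies E[dist(0, ∂̂F(x_R))²] ≤ ε². -/
/-
Each proximal gradient step decreases `F = f + r` enough: comparing the proximal objective at
`x (t + 1)` and at `x t`, and bounding `f` from above by its quadratic model (`f` is `L`-smooth),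
gives `F (x t) - F (x (t + 1)) ≥ (1 - ηL)/(2η) ‖x (t + 1) - x t‖²`. The residual
`g t = ∇f(x (t + 1)) - ∇f(x t) - (x (t + 1) - x t)/η` has norm at most `(L + 1/η) ‖x (t + 1) - x t‖`,
so `‖g t‖²` is at most a constant times that decrease, and the sum telescopes to at most `Δ`.
Finally `g t` is a Fréchet subgradient of `F` at `x (t + 1)`: the optimality of the proximal step
and the quadratic lower model of `f` give a quadratic minorant of `F` at `x (t + 1)` with slope `g t`.
-/

open RealInnerProductSpace Finset

/-- The Fréchet subdifferential of `h` at `x`. -/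
def frechetSubdiff {d : ℕ} (h : EuclideanSpace ℝ (Fin d) → ℝ) (x : EuclideanSpace ℝ (Fin d)) :
    Set (EuclideanSpace ℝ (Fin d)) :=
  {v | ∀ ε > (0 : ℝ), ∃ δ > (0 : ℝ), ∀ y, ‖y - x‖ < δ →
    h y - h x - ⟪v, y - x⟫ ≥ -ε * ‖y - x‖}

section Smooth

variable {E : Type*} [NormedAddCommGroup E] [InnerProductSpace ℝ E] [CompleteSpace E]
  {f : E → ℝ} {f' : E → E} {L : ℝ}

theorem abs_sub_sub_inner_le_of_lipschitz_gradient (hf : ∀ x, HasGradientAt f (f' x) x)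
    (hlip : ∀ x y, ‖f' x - f' y‖ ≤ L * ‖x - y‖) (a b : E) :
    |f b - f a - ⟪f' a, b - a⟫| ≤ L / 2 * ‖b - a‖ ^ 2 := by
  set v := b - a
  have hline : ∀ s : ℝ, HasDerivAt (fun s : ℝ => a + s • v) v s := fun s => by
    simpa using ((hasDerivAt_id s).smul_const v).const_add a
  have hg : ∀ s : ℝ, HasDerivAt (fun s : ℝ => f (a + s • v) - f a - s * ⟪f' a, v⟫)
      (⟪f' (a + s • v), v⟫ - ⟪f' a, v⟫) s := fun s => by
    have hf_line : HasDerivAt (f ∘ fun s : ℝ => a + s • v) ⟪f' (a + s • v), v⟫ s := by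
      simpa using (hf (a + s • v)).hasFDerivAt.comp_hasDerivAt s (hline s)
    exact (hf_line.sub_const (f a)).sub (by simpa using (hasDerivAt_id s).mul_const ⟪f' a, v⟫)
  have hB : ∀ s : ℝ, HasDerivAt (fun s : ℝ => L / 2 * ‖v‖ ^ 2 * s ^ 2) (L * ‖v‖ ^ 2 * s) s :=
    fun s => ((hasDerivAt_pow 2 s).const_mul (L / 2 * ‖v‖ ^ 2)).congr_deriv (by push_cast; ring)
  have hbound : ∀ s ∈ Set.Ico (0 : ℝ) 1, ‖⟪f' (a + s • v), v⟫ - ⟪f' a, v⟫‖ ≤ L * ‖v‖ ^ 2 * s := by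
    rintro s ⟨hs, -⟩
    calc ‖⟪f' (a + s • v), v⟫ - ⟪f' a, v⟫‖ = |⟪f' (a + s • v) - f' a, v⟫| := by
          rw [inner_sub_left, Real.norm_eq_abs]
      _ ≤ ‖f' (a + s • v) - f' a‖ * ‖v‖ := abs_real_inner_le_norm _ _
      _ ≤ L * ‖a + s • v - a‖ * ‖v‖ := by gcongr; exact hlip _ _
      _ = L * ‖v‖ ^ 2 * s := by
          rw [add_sub_cancel_left, norm_smul, Real.norm_of_nonneg hs]; ring
  have hfence := image_norm_le_of_norm_deriv_right_le_deriv_boundary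
    (fun s _ => (hg s).continuousAt.continuousWithinAt) (fun s _ => (hg s).hasDerivWithinAt)
    (by simp) hB hbound (Set.right_mem_Icc.2 zero_le_one)
  simpa [v] using hfence

end Smooth

section Prox

variable {E : Type*} [NormedAddCommGroup E] [InnerProductSpace ℝ E]

/-- `p ∈ prox_{ηr}(u)`. -/
def IsProxPoint (r : E → ℝ) (η : ℝ) (u p : E) : Prop :=
  ∀ y, r p + 1 / (2 * η) * ‖p - u‖ ^ 2 ≤ r y + 1 / (2 * η) * ‖y - u‖ ^ 2

theorem IsProxPoint.inner_sub_le {r : E → ℝ} {η : ℝ} {u p : E} (hp : IsProxPoint r η u p)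
    (y : E) : 1 / η * ⟪u - p, y - p⟫ - 1 / (2 * η) * ‖y - p‖ ^ 2 ≤ r y - r p := by
  have hexpand : ‖y - u‖ ^ 2 = ‖y - p‖ ^ 2 - 2 * ⟪u - p, y - p⟫ + ‖p - u‖ ^ 2 := by
    rw [show y - u = (y - p) - (u - p) by abel, norm_sub_sq_real, real_inner_comm,
      ← norm_neg (u - p), neg_sub]
  have hy := hp y
  rw [hexpand] at hy
  linarith [show 1 / (2 * η) * (‖y - p‖ ^ 2 - 2 * ⟪u - p, y - p⟫ + ‖p - u‖ ^ 2) =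
    1 / (2 * η) * ‖y - p‖ ^ 2 - 1 / η * ⟪u - p, y - p⟫ + 1 / (2 * η) * ‖p - u‖ ^ 2 by ring]

end Prox

section ProxGradStep

variable {E : Type*} [NormedAddCommGroup E] [InnerProductSpace ℝ E]
  {f r : E → ℝ} {f' : E → E} {L η : ℝ} {q p : E}

noncomputable def proxGradResidual (f' : E → E) (η : ℝ) (q p : E) : E :=
  f' p - f' q - (1 / η) • (p - q)

theorem norm_proxGradResidual_le (hlip : ∀ x y, ‖f' x - f' y‖ ≤ L * ‖x - y‖) (hη : 0 ≤ η)
    (q p : E) : ‖proxGradResidual f' η q p‖ ≤ (L + 1 / η) * ‖p - q‖ :=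
  calc ‖proxGradResidual f' η q p‖ ≤ ‖f' p - f' q‖ + ‖(1 / η) • (p - q)‖ := norm_sub_le _ _
    _ ≤ L * ‖p - q‖ + 1 / η * ‖p - q‖ := by
        rw [norm_smul, Real.norm_of_nonneg (by positivity)]
        gcongr
        exact hlip p q
    _ = (L + 1 / η) * ‖p - q‖ := by ring

theorem proxGradResidual_eq_add (hη : η ≠ 0) :
    proxGradResidual f' η q p = f' p + (1 / η) • (q - η • f' q - p) := by
  rw [proxGradResidual, sub_right_comm q, smul_sub (1 / η) (q - p), smul_smul,
    one_div_mul_cancel hη, one_smul, ← neg_sub p q, smul_neg]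
  abel

variable [CompleteSpace E]

theorem IsProxPoint.sufficient_decrease (hf : ∀ x, HasGradientAt f (f' x) x)
    (hlip : ∀ x y, ‖f' x - f' y‖ ≤ L * ‖x - y‖) (hη : η ≠ 0)
    (hp : IsProxPoint r η (q - η • f' q) p) :
    (1 - η * L) / (2 * η) * ‖p - q‖ ^ 2 ≤ (f q + r q) - (f p + r p) := by
  have hr := hp.inner_sub_le q
  have hfq := (abs_le.1 (abs_sub_sub_inner_le_of_lipschitz_gradient hf hlip q p)).2
  have hinner : 1 / η * ⟪q - η • f' q - p, q - p⟫ = 1 / η * ‖p - q‖ ^ 2 + ⟪f' q, p - q⟫ := by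
    rw [sub_right_comm, inner_sub_left, real_inner_self_eq_norm_sq, real_inner_smul_left,
      norm_sub_rev, ← neg_sub p q, inner_neg_right, real_inner_comm]
    field_simp
    ring
  rw [hinner, norm_sub_rev q p] at hr
  have hcoef : (1 - η * L) / (2 * η) * ‖p - q‖ ^ 2 =
      1 / η * ‖p - q‖ ^ 2 - 1 / (2 * η) * ‖p - q‖ ^ 2 - L / 2 * ‖p - q‖ ^ 2 := by
    field_simp
    ring
  linarith

theorem IsProxPoint.inner_proxGradResidual_sub_le (hf : ∀ x, HasGradientAt f (f' x) x)
    (hlip : ∀ x y, ‖f' x - f' y‖ ≤ L * ‖x - y‖) (hη : η ≠ 0)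
    (hp : IsProxPoint r η (q - η • f' q) p) (y : E) :
    ⟪proxGradResidual f' η q p, y - p⟫ - (L / 2 + 1 / (2 * η)) * ‖y - p‖ ^ 2 ≤
      (f y + r y) - (f p + r p) := by
  have hr := hp.inner_sub_le y
  have hfp := (abs_le.1 (abs_sub_sub_inner_le_of_lipschitz_gradient hf hlip p y)).1
  rw [proxGradResidual_eq_add hη, inner_add_left, real_inner_smul_left]
  linarith

theorem IsProxPoint.norm_proxGradResidual_sq_le (hf : ∀ x, HasGradientAt f (f' x) x)
    (hlip : ∀ x y, ‖f' x - f' y‖ ≤ L * ‖x - y‖) (hη : 0 < η) (hηL : η * L < 1)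
    (hp : IsProxPoint r η (q - η • f' q) p) :
    ‖proxGradResidual f' η q p‖ ^ 2 ≤
      4 * (η ^ 2 * L ^ 2 + 1) / (η * (1 - η * L)) * ((f q + r q) - (f p + r p)) := by
  have hdec := hp.sufficient_decrease hf hlip hη.ne'
  have hηL' : 0 < 1 - η * L := by linarith
  have hdec_nonneg : 0 ≤ (f q + r q) - (f p + r p) := le_trans (by positivity) hdec
  have hcoef : 2 * (η * L + 1) ^ 2 / (η * (1 - η * L)) * ((1 - η * L) / (2 * η)) =
      (L + 1 / η) ^ 2 := by
    field_simp
  calc ‖proxGradResidual f' η q p‖ ^ 2 ≤ ((L + 1 / η) * ‖p - q‖) ^ 2 :=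
        pow_le_pow_left₀ (norm_nonneg _) (norm_proxGradResidual_le hlip hη.le q p) 2
    _ = 2 * (η * L + 1) ^ 2 / (η * (1 - η * L)) * ((1 - η * L) / (2 * η) * ‖p - q‖ ^ 2) := by
        rw [← mul_assoc, hcoef, mul_pow]
    _ ≤ 2 * (η * L + 1) ^ 2 / (η * (1 - η * L)) * ((f q + r q) - (f p + r p)) := by gcongr
    _ ≤ 4 * (η ^ 2 * L ^ 2 + 1) / (η * (1 - η * L)) * ((f q + r q) - (f p + r p)) := by
        -- `(ηL + 1)² ≤ 2 (η²L² + 1)` turns this into the paper's constant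
        gcongr ?_ / _ * _
        nlinarith [sq_nonneg (η * L - 1)]

end ProxGradStep

theorem mem_frechetSubdiff_of_forall_inner_sub_le {d : ℕ} {h : EuclideanSpace ℝ (Fin d) → ℝ}
    {x v : EuclideanSpace ℝ (Fin d)} {C : ℝ}
    (hC : ∀ y, ⟪v, y - x⟫ - C * ‖y - x‖ ^ 2 ≤ h y - h x) : v ∈ frechetSubdiff h x := by
  intro ε hε
  refine ⟨ε / (|C| + 1), by positivity, fun y hy => ?_⟩
  have hquad : C * ‖y - x‖ ^ 2 ≤ ε * ‖y - x‖ :=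
    calc C * ‖y - x‖ ^ 2 ≤ (|C| + 1) * ‖y - x‖ * ‖y - x‖ := by
          rw [sq, ← mul_assoc]; gcongr; linarith [le_abs_self C]
      _ ≤ ε * ‖y - x‖ := by
          gcongr; exact ((lt_div_iff₀' (by positivity)).1 hy).le
  linarith [hC y]

theorem sum_range_le_mul_sub_of_le {a φ : ℕ → ℝ} {K : ℝ} (h : ∀ t, a t ≤ K * (φ t - φ (t + 1)))
    (T : ℕ) : ∑ t ∈ range T, a t ≤ K * (φ 0 - φ T) := by
  rw [← sum_range_sub' φ T, mul_sum]
  exact sum_le_sum fun t _ => h t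

/-- Convergence of proximal gradient descent (Theorem 1): with `η = c/L`, `0 < c < 1`, and
`T = 4(η²L²+1)Δ/(η(1-ηL)ε²)` iterations, the averaged squared residual is at most `ε²`, and hence
`E[dist(0, ∂̂F(x_R))²] ≤ ε²` for a uniformly sampled iterate. -/
theorem pgd_convergence {d : ℕ} (f r : EuclideanSpace ℝ (Fin d) → ℝ)
    (f' : EuclideanSpace ℝ (Fin d) → EuclideanSpace ℝ (Fin d)) (L c η Δ ε : ℝ)
    (hL : 0 < L) (hc : 0 < c) (hc1 : c < 1) (hηdef : η = c / L)
    (hdiff : ∀ x, HasGradientAt f (f' x) x)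
    (hlip : ∀ x y, ‖f' x - f' y‖ ≤ L * ‖x - y‖)
    (x : ℕ → EuclideanSpace ℝ (Fin d))
    (hmin : ∀ t, ∀ y, r (x (t + 1)) + 1 / (2 * η) * ‖x (t + 1) - (x t - η • f' (x t))‖ ^ 2 ≤
      r y + 1 / (2 * η) * ‖y - (x t - η • f' (x t))‖ ^ 2)
    (xstar : EuclideanSpace ℝ (Fin d))
    (hstar : ∀ y, f xstar + r xstar ≤ f y + r y)
    (hΔ : (f (x 0) + r (x 0)) - (f xstar + r xstar) ≤ Δ)
    (hε : 0 < ε) (T : ℕ) (hT : (T : ℝ) = 4 * (η ^ 2 * L ^ 2 + 1) * Δ / (η * (1 - η * L) * ε ^ 2)) :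
    (1 / (T : ℝ)) * ∑ t ∈ range T,
        ‖f' (x (t + 1)) - f' (x t) - (1 / η) • (x (t + 1) - x t)‖ ^ 2 ≤ ε ^ 2 ∧
      (1 / (T : ℝ)) * ∑ t ∈ range T,
        (Metric.infDist 0 (frechetSubdiff (fun y => f y + r y) (x (t + 1)))) ^ 2 ≤ ε ^ 2 := by
  have hη : 0 < η := by rw [hηdef]; positivity
  have hηL : η * L < 1 := by rwa [hηdef, div_mul_cancel₀ c hL.ne']
  have hprox : ∀ t, IsProxPoint r η (x t - η • f' (x t)) (x (t + 1)) := hmin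
  have hK : 0 ≤ 4 * (η ^ 2 * L ^ 2 + 1) / (η * (1 - η * L)) := by
    have : 0 < 1 - η * L := by linarith
    positivity
  have hsum : ∑ t ∈ range T, ‖proxGradResidual f' η (x t) (x (t + 1))‖ ^ 2 ≤ T * ε ^ 2 :=
    calc _ ≤ 4 * (η ^ 2 * L ^ 2 + 1) / (η * (1 - η * L)) *
            ((f (x 0) + r (x 0)) - (f (x T) + r (x T))) :=
          sum_range_le_mul_sub_of_le (φ := fun t => f (x t) + r (x t))
            (fun t => (hprox t).norm_proxGradResidual_sq_le hdiff hlip hη hηL) T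
      _ ≤ 4 * (η ^ 2 * L ^ 2 + 1) / (η * (1 - η * L)) * Δ := by
          gcongr
          linarith [hstar (x T)]
      _ = T * ε ^ 2 := by
          rw [hT]
          field_simp
  have hres : (1 / (T : ℝ)) * ∑ t ∈ range T,
      ‖proxGradResidual f' η (x t) (x (t + 1))‖ ^ 2 ≤ ε ^ 2 := by
    rw [one_div_mul_eq_div]
    exact div_le_of_le_mul₀ (Nat.cast_nonneg T) (sq_nonneg ε) (by linarith)
  refine ⟨hres, le_trans ?_ hres⟩
  gcongr with t
  · exact Metric.infDist_nonneg
  · have hmem := mem_frechetSubdiff_of_forall_inner_sub_le (h := fun y => f y + r y)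
      ((hprox t).inner_proxGradResidual_sub_le hdiff hlip hη.ne')
    exact (Metric.infDist_le_dist_of_mem hmem).trans_eq (dist_zero_left _)
end

section
/- Suppose x_{t+1} minimizes x ↦ r(x) + ⟨g_t, x - x_t⟩ + (1/(2η))‖x - x_t‖² and f is L-smooth. Then ⟨g_t - ∇f(x_t), x_{t+1} - x_t⟩ + (1/2)(1/η - L)‖x_{t+1} - x_t‖² ≤ F(x_t) - F(x_{t+1}), where F = f + r. -/
/-!
Along the segment from `x₀` to `x₁` the `L`-Lipschitz gradient keeps `f` below its quadratic
model `f x₀ + ⟪∇f x₀, x₁ - x₀⟫ + (L/2)‖x₁ - x₀‖²` (the descent lemma), while comparing the proximal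
objective at its minimizer `x₁` with its value at `x₀` bounds `r x₁` by
`r x₀ - ⟪g, x₁ - x₀⟫ - (1/(2η))‖x₁ - x₀‖²`. Adding the two bounds gives the inequality.
-/

open RealInnerProductSpace

section

variable {E : Type*} [NormedAddCommGroup E] [NormedSpace ℝ E]

theorem HasFDerivAt.hasDerivAt_comp_add_smul {f : E → ℝ} {f' : E →L[ℝ] ℝ} {x v : E} {t : ℝ}
    (hf : HasFDerivAt f f' (x + t • v)) :
    HasDerivAt (fun s : ℝ => f (x + s • v)) (f' v) t := by
  have hline : HasDerivAt (fun s : ℝ => x + s • v) v t := by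
    simpa using ((hasDerivAt_id t).smul_const v).const_add x
  exact hf.comp_hasDerivAt t hline

theorem image_le_add_fderiv_add_sq_of_lipschitz {f : E → ℝ} {f' : E → E →L[ℝ] ℝ} {L : ℝ}
    (hf : ∀ x, HasFDerivAt f (f' x) x) (hlip : ∀ x y, ‖f' x - f' y‖ ≤ L * ‖x - y‖) (x y : E) :
    f y ≤ f x + f' x (y - x) + L / 2 * ‖y - x‖ ^ 2 := by
  set v := y - x
  -- `ψ` is the gap between the quadratic model and `f` along the segment; the claim is `ψ 0 ≤ ψ 1`.
  set ψ : ℝ → ℝ := fun t => f x + t * f' x v + L * t ^ 2 / 2 * ‖v‖ ^ 2 - f (x + t • v)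
  have hψ' : ∀ t, HasDerivAt ψ (f' x v + L * t * ‖v‖ ^ 2 - f' (x + t • v) v) t := by
    intro t
    have hmodel : HasDerivAt (fun t : ℝ => f x + t * f' x v + L * t ^ 2 / 2 * ‖v‖ ^ 2)
        (f' x v + L * t * ‖v‖ ^ 2) t := by
      refine ((((hasDerivAt_id' t).mul_const (f' x v)).const_add (f x)).add
        ((((hasDerivAt_pow 2 t).const_mul L).div_const 2).mul_const (‖v‖ ^ 2))).congr_deriv ?_
      push_cast
      ring
    exact hmodel.sub (hf _).hasDerivAt_comp_add_smul
  have hderiv_nonneg : ∀ t ∈ interior (Set.Icc (0 : ℝ) 1),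
      0 ≤ f' x v + L * t * ‖v‖ ^ 2 - f' (x + t • v) v := by
    intro t ht
    rw [interior_Icc] at ht
    have hgap : ‖f' x - f' (x + t • v)‖ ≤ L * (t * ‖v‖) := by
      simpa [norm_smul, abs_of_nonneg ht.1.le] using hlip x (x + t • v)
    have hbound : |(f' x - f' (x + t • v)) v| ≤ L * t * ‖v‖ ^ 2 := calc
      _ ≤ ‖f' x - f' (x + t • v)‖ * ‖v‖ := (f' x - f' (x + t • v)).le_opNorm v
      _ ≤ L * (t * ‖v‖) * ‖v‖ := by gcongr
      _ = L * t * ‖v‖ ^ 2 := by ring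
    rw [sub_apply] at hbound
    linarith [neg_abs_le (f' x v - f' (x + t • v) v)]
  have hmono : MonotoneOn ψ (Set.Icc 0 1) :=
    monotoneOn_of_hasDerivWithinAt_nonneg (convex_Icc 0 1)
      (fun t _ => (hψ' t).continuousAt.continuousWithinAt)
      (fun t _ => (hψ' t).hasDerivWithinAt) hderiv_nonneg
  have h01 : ψ 0 ≤ ψ 1 := hmono (by norm_num) (by norm_num) zero_le_one
  simpa [ψ, v] using h01

end

theorem image_le_add_inner_gradient_add_sq_of_lipschitz {E : Type*} [NormedAddCommGroup E]
    [InnerProductSpace ℝ E] [CompleteSpace E] {f : E → ℝ} {f' : E → E} {L : ℝ}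
    (hf : ∀ x, HasGradientAt f (f' x) x) (hlip : ∀ x y, ‖f' x - f' y‖ ≤ L * ‖x - y‖) (x y : E) :
    f y ≤ f x + ⟪f' x, y - x⟫ + L / 2 * ‖y - x‖ ^ 2 := by
  refine image_le_add_fderiv_add_sq_of_lipschitz (fun x => (hf x).hasFDerivAt) (fun x y => ?_) x y
  rw [← map_sub, LinearIsometryEquiv.norm_map]
  exact hlip x y

theorem spg_per_step_inequality_general {d : ℕ} (f r : EuclideanSpace ℝ (Fin d) → ℝ)
    (f' : EuclideanSpace ℝ (Fin d) → EuclideanSpace ℝ (Fin d)) (L η : ℝ)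
    (hdiff : ∀ x, HasGradientAt f (f' x) x)
    (hlip : ∀ x y, ‖f' x - f' y‖ ≤ L * ‖x - y‖)
    (g x₀ x₁ : EuclideanSpace ℝ (Fin d))
    (hmin : ∀ x, r x₁ + ⟪g, x₁ - x₀⟫ + 1 / (2 * η) * ‖x₁ - x₀‖ ^ 2 ≤
      r x + ⟪g, x - x₀⟫ + 1 / (2 * η) * ‖x - x₀‖ ^ 2) :
    ⟪g - f' x₀, x₁ - x₀⟫ + 1 / 2 * (1 / η - L) * ‖x₁ - x₀‖ ^ 2 ≤
      (f x₀ + r x₀) - (f x₁ + r x₁) := by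
  have hprox : r x₁ + ⟪g, x₁ - x₀⟫ + 1 / (2 * η) * ‖x₁ - x₀‖ ^ 2 ≤ r x₀ := by
    simpa using hmin x₀
  have hdescent := image_le_add_inner_gradient_add_sq_of_lipschitz hdiff hlip x₀ x₁
  rw [inner_sub_left, show 1 / 2 * (1 / η - L) = 1 / (2 * η) - L / 2 by ring]
  linarith

/-- Per-step inequality of the stochastic proximal update: if `f` is `L`-smooth and `x₁` minimizes
`x ↦ r x + ⟪g, x - x₀⟫ + (1/(2η))‖x - x₀‖²`, then
`⟪g - ∇f x₀, x₁ - x₀⟫ + (1/2)(1/η - L)‖x₁ - x₀‖² ≤ F x₀ - F x₁` with `F = f + r`. -/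
theorem spg_per_step_inequality {d : ℕ} (f r : EuclideanSpace ℝ (Fin d) → ℝ)
    (f' : EuclideanSpace ℝ (Fin d) → EuclideanSpace ℝ (Fin d)) (L η : ℝ) (hL : 0 < L)
    (hdiff : ∀ x, HasGradientAt f (f' x) x)
    (hlip : ∀ x y, ‖f' x - f' y‖ ≤ L * ‖x - y‖) (hη : 0 < η)
    (g x₀ x₁ : EuclideanSpace ℝ (Fin d))
    (hmin : ∀ x, r x₁ + ⟪g, x₁ - x₀⟫ + 1 / (2 * η) * ‖x₁ - x₀‖ ^ 2 ≤
      r x + ⟪g, x - x₀⟫ + 1 / (2 * η) * ‖x - x₀‖ ^ 2) :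
    ⟪g - f' x₀, x₁ - x₀⟫ + 1 / 2 * (1 / η - L) * ‖x₁ - x₀‖ ^ 2 ≤
      (f x₀ + r x₀) - (f x₁ + r x₁) :=
  spg_per_step_inequality_general f r f' L η hdiff hlip g x₀ x₁ hmin
end

section
/- Under the stochastic proximal update with L-smooth f: ‖g_t - ∇f(x_{t+1}) + (1/η)(x_{t+1} - x_t)‖² ≤ 2‖g_t - ∇f(x_t)‖² + (2/η)(F(x_t) - F(x_{t+1})) + (2L² + 1/η² + 2L/η)‖x_{t+1} - x_t‖². -/
/-! Expanding the square, the cross term `(2/η)⟪g - ∇f x₁, x₁ - x₀⟫` is bounded by testing the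
optimality of `x₁` against `x₀` and by the first-order estimate
`|f x₀ - f x₁ - ⟪∇f x₁, x₀ - x₁⟫| ≤ L‖x₁ - x₀‖²` from the mean value inequality; the `-1/η²` this
produces cancels the `1/η²` of the expansion. The term `‖g - ∇f x₁‖²` is split at `∇f x₀` with
`(a + b)² ≤ 2a² + 2b²` and the Lipschitz bound. -/

open RealInnerProductSpace

theorem norm_image_sub_sub_fderiv_le_of_lipschitz {E F : Type*} [NormedAddCommGroup E]
    [NormedSpace ℝ E] [NormedAddCommGroup F] [NormedSpace ℝ F] {f : E → F}
    {f' : E → E →L[ℝ] F} {L : ℝ} (hf : ∀ x, HasFDerivAt f (f' x) x) (hL : 0 ≤ L)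
    (hlip : ∀ x y, ‖f' x - f' y‖ ≤ L * ‖x - y‖) (x y : E) :
    ‖f y - f x - f' x (y - x)‖ ≤ L * ‖y - x‖ ^ 2 := by
  have bound : ∀ z ∈ segment ℝ x y, ‖f' z - f' x‖ ≤ L * ‖y - x‖ := fun z hz =>
    (hlip z x).trans (mul_le_mul_of_nonneg_left (norm_sub_le_of_mem_segment hz) hL)
  have := (convex_segment x y).norm_image_sub_le_of_norm_hasFDerivWithin_le'
    (fun z _ => (hf z).hasFDerivWithinAt) bound (left_mem_segment ℝ x y) (right_mem_segment ℝ x y)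
  rwa [mul_assoc, ← sq] at this

theorem abs_sub_sub_inner_le_of_gradient_lipschitz {E : Type*} [NormedAddCommGroup E]
    [InnerProductSpace ℝ E] [CompleteSpace E] {f : E → ℝ} {f' : E → E} {L : ℝ}
    (hf : ∀ x, HasGradientAt f (f' x) x) (hL : 0 ≤ L)
    (hlip : ∀ x y, ‖f' x - f' y‖ ≤ L * ‖x - y‖) (x y : E) :
    |f y - f x - ⟪f' x, y - x⟫| ≤ L * ‖y - x‖ ^ 2 := by
  refine norm_image_sub_sub_fderiv_le_of_lipschitz
    (f' := fun x => InnerProductSpace.toDual ℝ E (f' x))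
    (fun x => hasGradientAt_iff_hasFDerivAt.mp (hf x)) hL (fun x y => ?_) x y
  rw [← map_sub, LinearIsometryEquiv.norm_map]
  exact hlip x y

theorem norm_sub_sq_le_two_mul_add_two_mul {E : Type*} [SeminormedAddCommGroup E] (g a b : E) :
    ‖g - b‖ ^ 2 ≤ 2 * ‖g - a‖ ^ 2 + 2 * ‖a - b‖ ^ 2 := by
  calc ‖g - b‖ ^ 2 ≤ (‖g - a‖ + ‖a - b‖) ^ 2 :=
        pow_le_pow_left₀ (norm_nonneg _) (norm_sub_le_norm_sub_add_norm_sub g a b) 2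
    _ ≤ 2 * (‖g - a‖ ^ 2 + ‖a - b‖ ^ 2) := add_sq_le
    _ = 2 * ‖g - a‖ ^ 2 + 2 * ‖a - b‖ ^ 2 := mul_add _ _ _

/-- Bound on the subgradient residual of the stochastic proximal update:
`‖g - ∇f x₁ + (1/η)(x₁ - x₀)‖² ≤ 2‖g - ∇f x₀‖² + (2/η)(F x₀ - F x₁)
  + (2L² + 1/η² + 2L/η)‖x₁ - x₀‖²`. -/
theorem spg_residual_bound {d : ℕ} (f r : EuclideanSpace ℝ (Fin d) → ℝ)
    (f' : EuclideanSpace ℝ (Fin d) → EuclideanSpace ℝ (Fin d)) (L η : ℝ) (hL : 0 < L)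
    (hdiff : ∀ x, HasGradientAt f (f' x) x)
    (hlip : ∀ x y, ‖f' x - f' y‖ ≤ L * ‖x - y‖) (hη : 0 < η)
    (g x₀ x₁ : EuclideanSpace ℝ (Fin d))
    (hmin : ∀ x, r x₁ + ⟪g, x₁ - x₀⟫ + 1 / (2 * η) * ‖x₁ - x₀‖ ^ 2 ≤
      r x + ⟪g, x - x₀⟫ + 1 / (2 * η) * ‖x - x₀‖ ^ 2) :
    ‖g - f' x₁ + (1 / η) • (x₁ - x₀)‖ ^ 2 ≤
      2 * ‖g - f' x₀‖ ^ 2 + 2 / η * ((f x₀ + r x₀) - (f x₁ + r x₁)) +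
        (2 * L ^ 2 + 1 / η ^ 2 + 2 * L / η) * ‖x₁ - x₀‖ ^ 2 := by
  set δ := x₁ - x₀
  have hprox : r x₁ + ⟪g, δ⟫ + 1 / (2 * η) * ‖δ‖ ^ 2 ≤ r x₀ := by simpa using hmin x₀
  have hdesc : -(L * ‖δ‖ ^ 2) ≤ f x₀ - f x₁ + ⟪f' x₁, δ⟫ := by
    have h := abs_sub_sub_inner_le_of_gradient_lipschitz hdiff hL.le hlip x₁ x₀
    rw [← neg_sub x₁ x₀, inner_neg_right, norm_neg, sub_neg_eq_add] at h
    exact (abs_le.mp h).1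
  have hgrad : ‖g - f' x₁‖ ^ 2 ≤ 2 * ‖g - f' x₀‖ ^ 2 + 2 * L ^ 2 * ‖δ‖ ^ 2 := by
    have hl : ‖f' x₀ - f' x₁‖ ^ 2 ≤ (L * ‖δ‖) ^ 2 := by
      rw [← norm_neg δ, neg_sub]
      exact pow_le_pow_left₀ (norm_nonneg _) (hlip x₀ x₁) 2
    linarith [norm_sub_sq_le_two_mul_add_two_mul g (f' x₀) (f' x₁)]
  have hexpand : ‖g - f' x₁ + (1 / η) • δ‖ ^ 2 =
      ‖g - f' x₁‖ ^ 2 + 2 / η * (⟪g, δ⟫ - ⟪f' x₁, δ⟫) + 1 / η ^ 2 * ‖δ‖ ^ 2 := by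
    rw [norm_add_sq_real, real_inner_smul_right, norm_smul, inner_sub_left, Real.norm_eq_abs,
      abs_of_pos (one_div_pos.mpr hη)]
    ring
  have hcross : ⟪g, δ⟫ - ⟪f' x₁, δ⟫ ≤
      (f x₀ + r x₀) - (f x₁ + r x₁) + (L - 1 / (2 * η)) * ‖δ‖ ^ 2 := by
    linarith
  have hscaled : 2 / η * (⟪g, δ⟫ - ⟪f' x₁, δ⟫) ≤
      2 / η * ((f x₀ + r x₀) - (f x₁ + r x₁)) + (2 * L / η - 1 / η ^ 2) * ‖δ‖ ^ 2 := by
    calc _ ≤ 2 / η * ((f x₀ + r x₀) - (f x₁ + r x₁) + (L - 1 / (2 * η)) * ‖δ‖ ^ 2) :=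
          mul_le_mul_of_nonneg_left hcross (by positivity)
      _ = _ := by field_simp
  rw [hexpand]
  linarith [show 0 ≤ 1 / η ^ 2 * ‖δ‖ ^ 2 by positivity]
end
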